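/- arXiv:2604.20111 — 2 statements merged into one kernel-verified Lean document; each statement's English description precedes it below -/
import Mathlib

section
/- (Variable selection consistency of MAM with logistic loss, Theorem 4.) Suppose y_i ∈ {−1, 1} for all i ∈ {1,…,n}, and let β̂ be a local minimizer of the MAM lower-level objective β ↦ (1/n) Σ_{i=1}^n v_i ( log(1 + exp(f_β(i))) − y_i f_β(i) ) + λ Σ_{j=1}^p τ_j ‖β_j‖₂. If λ τ_j > 2 √d M_j for every j with p* < j ≤ p, then β̂_j = 0 for every j > p*; i.e., the estimated informative set Ĵ = {j : β̂_j ≠ 0} satisfies Ĵ ⊆ {1,…,p*}. -/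
open scoped RealInnerProductSpace ENNReal
open Function

/-!
Shrinking the block `β̂ⱼ` to `(1 - t) β̂ⱼ` lowers the group-lasso penalty by `λ τⱼ t ‖β̂ⱼ‖`, while
the logistic loss `u ↦ log (1 + eᵘ) - y u` is `2`-Lipschitz for `|y| ≤ 1` and the predictor moves
by at most `‖ψᵢⱼ‖ t ‖β̂ⱼ‖ ≤ √d Mⱼ t ‖β̂ⱼ‖`, so the weighted empirical risk grows by at most
`2 √d Mⱼ t ‖β̂ⱼ‖`. Under `λ τⱼ > 2 √d Mⱼ` a nonzero block could therefore be shrunk to strictly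
decrease the objective at points arbitrarily close to `β̂`.
-/

theorem Fintype.sum_apply_update {ι M : Type*} [Fintype ι] [DecidableEq ι] [AddCommGroup M]
    {E : ι → Type*} (h : ∀ k, E k → M) (β : ∀ k, E k) (j : ι) (w : E j) :
    ∑ k, h k (update β j w k) = ∑ k, h k (β k) + (h j w - h j (β j)) := by
  simp_rw [apply_update h β j w]
  rw [Finset.sum_update_of_mem (Finset.mem_univ j),
    Finset.sum_eq_add_sum_sdiff_singleton_of_mem (Finset.mem_univ j) (fun k => h k (β k))]
  abel

theorem EuclideanSpace.norm_le_sqrt_card_mul {ι : Type*} [Fintype ι] {x : EuclideanSpace ℝ ι}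
    {m : ℝ} (h : ∀ k, |x k| ≤ m) : ‖x‖ ≤ √(Fintype.card ι) * m := by
  rcases isEmpty_or_nonempty ι with hι | ⟨⟨k⟩⟩
  · simp [Subsingleton.elim x 0]
  have hm : 0 ≤ m := (abs_nonneg _).trans (h k)
  rw [EuclideanSpace.norm_eq, ← Real.sqrt_sq hm, ← Real.sqrt_mul (Nat.cast_nonneg _)]
  refine Real.sqrt_le_sqrt ?_
  calc ∑ k, ‖x k‖ ^ 2 ≤ ∑ _k : ι, m ^ 2 :=
        Finset.sum_le_sum fun k _ => pow_le_pow_left₀ (norm_nonneg _) (h k) 2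
    _ = Fintype.card ι * m ^ 2 := by simp

theorem PiLp.eq_zero_of_isLocalMin_add_groupLasso {ι : Type*} [Fintype ι] [DecidableEq ι]
    {p : ℝ≥0∞} {E : ι → Type*} [∀ k, NormedAddCommGroup (E k)] [∀ k, NormedSpace ℝ (E k)]
    {L : PiLp p E → ℝ} {lam G : ℝ} {τ : ι → ℝ} {β : PiLp p E} {j : ι}
    (hmin : IsLocalMin (fun β : PiLp p E => L β + lam * ∑ k, τ k * ‖β k‖) β)
    (hL : ∀ w : E j, L (WithLp.toLp p (update β.ofLp j w)) ≤ L β + G * ‖w - β j‖)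
    (hG : G < lam * τ j) :
    β j = 0 := by
  by_contra hb
  have hr : 0 < ‖β j‖ := norm_pos_iff.2 hb
  set γ : ℝ → PiLp p E := fun t => WithLp.toLp p (update β.ofLp j ((1 - t) • β j)) with hγ
  have hγ_cont : Continuous γ := (PiLp.continuous_toLp p E).comp <|
    continuous_const.update j ((continuous_const.sub continuous_id).smul continuous_const)
  have hγ0 : γ 0 = β := by simp [hγ]
  have hmin' := (hγ0 ▸ hmin).comp_continuous hγ_cont.continuousAt
  obtain ⟨t, hle, ht0, ht1⟩ :=
    ((hmin'.filter_mono nhdsWithin_le_nhds).and (Ioo_mem_nhdsGT one_pos)).exists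
  have hpen : ∑ k, τ k * ‖(γ t) k‖ = ∑ k, τ k * ‖β k‖ - t * (τ j * ‖β j‖) := by
    rw [hγ, Fintype.sum_apply_update (fun k x => τ k * ‖x‖), norm_smul,
      Real.norm_of_nonneg (by linarith)]
    ring
  have hloss : L (γ t) ≤ L β + G * (t * ‖β j‖) := by
    have hstep : (1 - t) • β j - β j = (-t) • β j := by module
    simpa [hstep, norm_smul, abs_of_pos ht0] using hL ((1 - t) • β j)
  simp only [comp_apply, hγ0, hpen] at hle
  nlinarith [mul_pos ht0 hr]

noncomputable def logisticLoss (y u : ℝ) : ℝ :=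
  Real.log (1 + Real.exp u) - y * u

theorem lipschitzWith_log_one_add_exp : LipschitzWith 1 fun x : ℝ => Real.log (1 + Real.exp x) := by
  have hderiv (x : ℝ) : HasDerivAt (fun x : ℝ => Real.log (1 + Real.exp x))
      (Real.exp x / (1 + Real.exp x)) x :=
    ((Real.hasDerivAt_exp x).const_add 1).log (by positivity)
  refine lipschitzWith_of_nnnorm_deriv_le (fun x => (hderiv x).differentiableAt) fun x => ?_
  rw [(hderiv x).deriv, ← NNReal.coe_le_coe, coe_nnnorm, Real.norm_of_nonneg (by positivity),
    NNReal.coe_one, div_le_one (by positivity)]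
  linarith

theorem abs_logisticLoss_sub_le {y : ℝ} (hy : |y| ≤ 1) (a b : ℝ) :
    |logisticLoss y a - logisticLoss y b| ≤ 2 * |a - b| := by
  have hsoftplus : |Real.log (1 + Real.exp a) - Real.log (1 + Real.exp b)| ≤ |a - b| := by
    simpa [Real.dist_eq] using lipschitzWith_log_one_add_exp.dist_le_mul a b
  have hlinear : |y * a - y * b| ≤ |a - b| := by
    rw [← mul_sub, abs_mul]
    exact mul_le_of_le_one_left (abs_nonneg _) hy
  calc |logisticLoss y a - logisticLoss y b|
      = |(Real.log (1 + Real.exp a) - Real.log (1 + Real.exp b)) - (y * a - y * b)| := by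
        unfold logisticLoss; ring_nf
    _ ≤ _ := abs_sub _ _
    _ ≤ 2 * |a - b| := by linarith

section LogisticRisk

variable {n : ℕ} {ι : Type*} [Fintype ι] {E : ι → Type*} [∀ k, NormedAddCommGroup (E k)]
  [∀ k, InnerProductSpace ℝ (E k)]

noncomputable def logisticRisk (ψ : Fin n → ∀ k, E k) (v y : Fin n → ℝ) (β : ∀ k, E k) : ℝ :=
  (1 / (n : ℝ)) * ∑ i, v i * logisticLoss (y i) (∑ k, ⟪ψ i k, β k⟫)

theorem logisticRisk_update_le [DecidableEq ι] {ψ : Fin n → ∀ k, E k} {v y : Fin n → ℝ}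
    (hn : 0 < n) (hv : ∀ i, v i ∈ Set.Icc (0 : ℝ) 1) (hy : ∀ i, |y i| ≤ 1) {j : ι} {C : ℝ}
    (hψ : ∀ i, ‖ψ i j‖ ≤ C) (β : ∀ k, E k) (w : E j) :
    logisticRisk ψ v y (update β j w) ≤ logisticRisk ψ v y β + 2 * C * ‖w - β j‖ := by
  have hsample (i : Fin n) :
      v i * logisticLoss (y i) (∑ k, ⟪ψ i k, update β j w k⟫)
        ≤ v i * logisticLoss (y i) (∑ k, ⟪ψ i k, β k⟫) + 2 * C * ‖w - β j‖ := by
    have hpred : ∑ k, ⟪ψ i k, update β j w k⟫ - ∑ k, ⟪ψ i k, β k⟫ = ⟪ψ i j, w - β j⟫ := by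
      rw [Fintype.sum_apply_update (fun k x => ⟪ψ i k, x⟫), inner_sub_right]
      ring
    have hloss := abs_logisticLoss_sub_le (hy i) (∑ k, ⟪ψ i k, update β j w k⟫)
      (∑ k, ⟪ψ i k, β k⟫)
    rw [hpred] at hloss
    have hinner : |⟪ψ i j, w - β j⟫| ≤ C * ‖w - β j‖ :=
      (abs_real_inner_le_norm _ _).trans (mul_le_mul_of_nonneg_right (hψ i) (norm_nonneg _))
    obtain ⟨hv0, hv1⟩ := hv i
    nlinarith [abs_le.1 hloss]
  unfold logisticRisk
  have hn' : (n : ℝ) ≠ 0 := by positivity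
  calc (1 / (n : ℝ)) * ∑ i, v i * logisticLoss (y i) (∑ k, ⟪ψ i k, update β j w k⟫)
      ≤ (1 / (n : ℝ)) * ∑ i, (v i * logisticLoss (y i) (∑ k, ⟪ψ i k, β k⟫)
          + 2 * C * ‖w - β j‖) :=
        mul_le_mul_of_nonneg_left (Finset.sum_le_sum fun i _ => hsample i) (by positivity)
    _ = _ := by
        rw [Finset.sum_add_distrib, Finset.sum_const, Finset.card_univ, Fintype.card_fin,
          nsmul_eq_mul]
        field_simp

end LogisticRisk

theorem variable_selection_consistency_logistic_loss_general
    (n p d pStar : ℕ) (hn : 0 < n)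
    (ψ : Fin n → Fin p → EuclideanSpace ℝ (Fin d))
    (M : Fin p → ℝ)
    (hψ : ∀ i j k, |ψ i j k| ≤ M j)
    (v : Fin n → ℝ) (hv : ∀ i, v i ∈ Set.Icc (0 : ℝ) 1)
    (y : Fin n → ℝ) (hy : ∀ i, y i = -1 ∨ y i = 1)
    (lam : ℝ)
    (τ : Fin p → ℝ)
    (βhat : PiLp 2 (fun _ : Fin p => EuclideanSpace ℝ (Fin d)))
    (hmin : IsLocalMin
      (fun β : PiLp 2 (fun _ : Fin p => EuclideanSpace ℝ (Fin d)) =>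
        (1 / (n : ℝ)) * ∑ i, v i *
          (Real.log (1 + Real.exp (∑ j, ⟪ψ i j, β j⟫)) - y i * ∑ j, ⟪ψ i j, β j⟫)
          + lam * ∑ j, τ j * ‖β j‖) βhat)
    (hthresh : ∀ j : Fin p, pStar ≤ (j : ℕ) →
      2 * Real.sqrt d * M j < lam * τ j) :
    ∀ j : Fin p, pStar ≤ (j : ℕ) → βhat j = 0 := by
  intro j hj
  have hψj (i : Fin n) : ‖ψ i j‖ ≤ √d * M j := by
    simpa using EuclideanSpace.norm_le_sqrt_card_mul (hψ i j)
  have hy' (i : Fin n) : |y i| ≤ 1 := by rcases hy i with h | h <;> simp [h]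
  refine PiLp.eq_zero_of_isLocalMin_add_groupLasso
    (L := fun β => logisticRisk ψ v y β.ofLp) (G := 2 * (√d * M j)) hmin (fun w => ?_)
    (by linarith [hthresh j hj])
  simpa [mul_assoc] using logisticRisk_update_le hn hv hy' hψj βhat.ofLp w

/-- Theorem 4 (variable selection consistency of MAM with the logistic loss):
at a local minimizer `β̂` of the weighted empirical logistic loss plus the group-lasso
penalty, every block `j` outside the truly informative set `{1,…,p*}` (i.e. with
`p* ≤ j` in 0-based indexing) vanishes whenever `λ τ_j > 2 √d M_j`;
hence `Ĵ = {j : β̂_j ≠ 0} ⊆ {1,…,p*}`. -/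
theorem variable_selection_consistency_logistic_loss
    (n p d pStar : ℕ) (hn : 0 < n) (hpStar : pStar ≤ p)
    (ψ : Fin n → Fin p → EuclideanSpace ℝ (Fin d))
    (M : Fin p → ℝ) (hM : ∀ j, 0 < M j)
    (hψ : ∀ i j k, |ψ i j k| ≤ M j)
    (v : Fin n → ℝ) (hv : ∀ i, v i ∈ Set.Icc (0 : ℝ) 1)
    (y : Fin n → ℝ) (hy : ∀ i, y i = -1 ∨ y i = 1)
    (lam : ℝ) (hlam : 0 < lam)
    (τ : Fin p → ℝ) (hτ : ∀ j, 0 < τ j)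
    (βhat : PiLp 2 (fun _ : Fin p => EuclideanSpace ℝ (Fin d)))
    (hmin : IsLocalMin
      (fun β : PiLp 2 (fun _ : Fin p => EuclideanSpace ℝ (Fin d)) =>
        (1 / (n : ℝ)) * ∑ i, v i *
          (Real.log (1 + Real.exp (∑ j, ⟪ψ i j, β j⟫)) - y i * ∑ j, ⟪ψ i j, β j⟫)
          + lam * ∑ j, τ j * ‖β j‖) βhat)
    (hthresh : ∀ j : Fin p, pStar ≤ (j : ℕ) →
      2 * Real.sqrt d * M j < lam * τ j) :
    ∀ j : Fin p, pStar ≤ (j : ℕ) → βhat j = 0 :=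
  variable_selection_consistency_logistic_loss_general n p d pStar hn ψ M hψ v hv y hy lam τ βhat
    hmin hthresh
end

section
/- (Theorem 6: generalization bound for the MAM bilevel algorithm.) Let Z be a measurable space with meta distribution μ and let the upper losses satisfy: for every ξ ∈ Z, the map θ ↦ ℓ(θ, β(θ), ξ) (the meta loss of the one-step-updated lower parameter, viewed as a function of the weighting parameter θ ∈ ℝ^k) takes values in [0,1], is L̄-Lipschitz, and has γ̄-Lipschitz gradient. Let A be the algorithm that, given a meta dataset D ∈ Z^m and a training dataset W' ∈ W^n, runs T steps of stochastic gradient descent on the empirical meta risk θ ↦ (1/m) Σ_{i=1}^m ℓ(θ, β(θ), ξ_i) with uniformly sampled meta examples and step sizes η_t ≤ c/t, where c ≤ s(ℓ)/(2 L̄²) for a fixed constant s(ℓ). Then there exist constants K > 0 and C ∈ (0, 1), depending only on c, L̄ and γ̄ (and not on T or m), such that | E[ R(A(D, W')) − R̂_D(A(D, W')) ] | ≤ K · T^C / m, where R(θ) = E_{ξ∼μ}[ℓ(θ, β(θ), ξ)] is the population meta risk, R̂_D is the empirical meta risk on D, and the expectation is over the algorithm's randomness and over D ∼ μ^m, W'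 ∼ ν^n. -/
/-!
Uniform stability in the sense of Hardt, Recht and Singer. If replacing one of the `m` meta
examples changes the expected loss of the output at any test point by at most `ε`, the expected
generalization gap is at most `ε`: for every index `i`, swapping the `i`-th meta example with a
fresh test point preserves the product measure.

For SGD the two runs on datasets differing in the `j`-th example coincide until index `j` is
first sampled, which happens within the first `t₀` steps with probability at most `t₀ / m`.
Afterwards a step expands the distance between the runs by at most `1 + η t γ` (the gradients
are `γ`-Lipschitz) and adds `2 η t L` only when it samples `j`, which has probability `1 / m`.
With `η t ≤ c / t` the expansion from step `t` to `T` is at most `(T / t) ^ (γ c)`, and the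
cut-off `t₀ = ⌈T ^ (q / (1 + q))⌉`, `q = γ c`, makes both contributions `O(T ^ (q / (1 + q)))`.
-/

open MeasureTheory Finset

lemma abs_le_one_of_mem_Icc {x : ℝ} (hx : x ∈ Set.Icc (0 : ℝ) 1) : |x| ≤ 1 :=
  abs_le.2 ⟨by linarith [hx.1], hx.2⟩

section BoundedIntegrals

variable {α : Type*} [MeasurableSpace α] {μ : Measure α} {f g : α → ℝ} {B : ℝ}

lemma integrable_of_abs_le [IsFiniteMeasure μ] (hf : StronglyMeasurable f)
    (hB : ∀ x, |f x| ≤ B) : Integrable f μ :=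
  .of_bound hf.aestronglyMeasurable B (.of_forall fun x => by simpa using hB x)

variable [IsProbabilityMeasure μ]

lemma abs_integral_le_of_abs_le (hB : ∀ x, |f x| ≤ B) : |∫ x, f x ∂μ| ≤ B := by
  simpa using norm_integral_le_of_norm_le_const (μ := μ) (f := f) (.of_forall hB)

lemma abs_integral_sub_integral_le (hf : Integrable f μ) (hg : Integrable g μ)
    (hB : ∀ x, |f x - g x| ≤ B) : |∫ x, f x ∂μ - ∫ x, g x ∂μ| ≤ B := by
  rw [← integral_sub hf hg]
  exact abs_integral_le_of_abs_le hB

end BoundedIntegrals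

lemma measurePreserving_update {ι : Type*} [Fintype ι] [DecidableEq ι] {X : ι → Type*}
    [∀ i, MeasurableSpace (X i)] (μ : ∀ i, Measure (X i)) [∀ i, SigmaFinite (μ i)] (j : ι)
    [IsProbabilityMeasure (μ j)] :
    MeasurePreserving (fun p : (∀ i, X i) × X j => Function.update p.1 j p.2)
      ((Measure.pi μ).prod (μ j)) (Measure.pi μ) where
  measurable := measurable_update'
  map_eq := by
    refine (Measure.pi_eq fun s hs => ?_).symm
    have hpre : (fun p : (∀ i, X i) × X j => Function.update p.1 j p.2) ⁻¹' Set.univ.pi s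
        = Set.univ.pi (Function.update s j Set.univ) ×ˢ s j := by
      ext ⟨x, ξ⟩
      simp only [Set.mem_preimage, Set.mem_pi, Set.mem_univ, true_implies, Set.mem_prod]
      refine ⟨fun h => ⟨fun i => ?_, by simpa using h j⟩, fun h i => ?_⟩ <;>
        rcases eq_or_ne i j with rfl | hi
      · simp
      · simpa [hi] using h i
      · simpa using h.2
      · simpa [hi] using h.1 i
    rw [Measure.map_apply measurable_update' (.univ_pi hs), hpre, Measure.prod_prod,
      Measure.pi_pi, ← mul_prod_erase univ _ (mem_univ j),
      ← mul_prod_erase univ (fun i => μ i (s i)) (mem_univ j), Function.update_self,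
      measure_univ, one_mul, mul_comm]
    congr 1
    exact prod_congr rfl fun i hi => by rw [Function.update_of_ne (ne_of_mem_erase hi)]

lemma integral_integral_update {ι : Type*} [Fintype ι] [DecidableEq ι] {X : ι → Type*}
    [∀ i, MeasurableSpace (X i)] (μ : ∀ i, Measure (X i)) [∀ i, SigmaFinite (μ i)] (j : ι)
    [IsProbabilityMeasure (μ j)] {E : Type*} [NormedAddCommGroup E] [NormedSpace ℝ E]
    {H : (∀ i, X i) → E} (hH : Integrable H (Measure.pi μ)) :
    ∫ x, ∫ ξ, H (Function.update x j ξ) ∂μ j ∂Measure.pi μ = ∫ x, H x ∂Measure.pi μ := by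
  have hΨ := measurePreserving_update μ j
  rw [← integral_prod (fun p => H (Function.update p.1 j p.2))
    (hΨ.integrable_comp_of_integrable hH)]
  conv_rhs => rw [← hΨ.map_eq]
  exact (integral_map hΨ.measurable.aemeasurable
    (by rw [hΨ.map_eq]; exact hH.aestronglyMeasurable)).symm

lemma abs_sub_average_le {m : ℕ} (hm : m ≠ 0) {x ε : ℝ} {y : Fin m → ℝ}
    (h : ∀ i, |x - y i| ≤ ε) : |x - (1 / (m : ℝ)) * ∑ i, y i| ≤ ε := by
  have hm' : (m : ℝ) ≠ 0 := by exact_mod_cast hm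
  have hx : x - (1 / (m : ℝ)) * ∑ i, y i = (1 / (m : ℝ)) * ∑ i, (x - y i) := by
    rw [sum_sub_distrib, sum_const, card_univ, Fintype.card_fin, nsmul_eq_mul]
    field_simp
  calc |x - (1 / (m : ℝ)) * ∑ i, y i| ≤ (1 / (m : ℝ)) * ∑ _i : Fin m, ε := by
        rw [hx, abs_mul, abs_of_nonneg (by positivity)]
        gcongr
        exact (abs_sum_le_sum_abs _ _).trans (sum_le_sum fun i _ => h i)
    _ = ε := by
        rw [sum_const, card_univ, Fintype.card_fin, nsmul_eq_mul]
        field_simp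

section ResampleOne

variable {ι Z : Type*} [Fintype ι] [MeasurableSpace Z] {μ : Measure Z}
  [IsProbabilityMeasure μ] {Φ : (ι → Z) → Z → ℝ} {B ε : ℝ}

lemma integrable_integral_uncurry (hΦ : StronglyMeasurable (Function.uncurry Φ))
    (hΦB : ∀ D ξ, |Φ D ξ| ≤ B) : Integrable (fun D => ∫ ξ, Φ D ξ ∂μ) (Measure.pi fun _ => μ) :=
  integrable_of_abs_le hΦ.integral_prod_right' fun D => abs_integral_le_of_abs_le (hΦB D)

lemma integrable_apply_diag (hΦ : StronglyMeasurable (Function.uncurry Φ))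
    (hΦB : ∀ D ξ, |Φ D ξ| ≤ B) (i : ι) :
    Integrable (fun D => Φ D (D i)) (Measure.pi fun _ => μ) :=
  integrable_of_abs_le (hΦ.comp_measurable (measurable_id.prodMk (measurable_pi_apply i)))
    fun D => hΦB D (D i)

lemma abs_integral_integral_sub_integral_apply_le [DecidableEq ι]
    (hΦ : StronglyMeasurable (Function.uncurry Φ)) (hΦB : ∀ D ξ, |Φ D ξ| ≤ B) (i : ι)
    (hε : ∀ D ξ, |Φ D ξ - Φ (Function.update D i ξ) ξ| ≤ ε) :
    |∫ D, ∫ ξ, Φ D ξ ∂μ ∂Measure.pi (fun _ => μ) - ∫ D, Φ D (D i) ∂Measure.pi (fun _ => μ)|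
      ≤ ε := by
  have hupd : StronglyMeasurable fun p : (ι → Z) × Z => Φ (Function.update p.1 i p.2) p.2 :=
    hΦ.comp_measurable (measurable_update'.prodMk measurable_snd)
  have hswap : ∫ D, Φ D (D i) ∂Measure.pi (fun _ => μ)
      = ∫ D, ∫ ξ, Φ (Function.update D i ξ) ξ ∂μ ∂Measure.pi (fun _ => μ) := by
    simpa using (integral_integral_update (fun _ => μ) i (integrable_apply_diag hΦ hΦB i)).symm
  rw [hswap]
  refine abs_integral_sub_integral_le (integrable_integral_uncurry hΦ hΦB)
    (integrable_of_abs_le hupd.integral_prod_right' fun D =>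
      abs_integral_le_of_abs_le fun ξ => hΦB _ ξ) fun D => ?_
  exact abs_integral_sub_integral_le
    (integrable_of_abs_le (hΦ.comp_measurable measurable_prodMk_left) (hΦB D))
    (integrable_of_abs_le (hupd.comp_measurable measurable_prodMk_left) fun ξ => hΦB _ ξ)
    (hε D)

end ResampleOne

section Stability

variable {Z R : Type*} [MeasurableSpace Z] [MeasurableSpace R] {m : ℕ}

/-- `ℓ D r ξ` models the loss at the test point `ξ` of the output of a randomized algorithm
trained on `D`, run with internal randomness `r ∼ ρ`. -/
def IsUniformlyStable (ρ : Measure R) (ℓ : (Fin m → Z) → R → Z → ℝ) (ε : ℝ) : Prop :=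
  ∀ (D : Fin m → Z) (j : Fin m) (ξ' ξ : Z),
    |∫ r, ℓ D r ξ ∂ρ - ∫ r, ℓ (Function.update D j ξ') r ξ ∂ρ| ≤ ε

variable {μ : Measure Z} [IsProbabilityMeasure μ] {ρ : Measure R} [IsProbabilityMeasure ρ]
  {ℓ : (Fin m → Z) → R → Z → ℝ} {B : ℝ}

lemma integrable_loss (hℓ : Measurable fun p : (Fin m → Z) × R × Z => ℓ p.1 p.2.1 p.2.2)
    (hB : ∀ D r ξ, |ℓ D r ξ| ≤ B) (D : Fin m → Z) (ξ : Z) :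
    Integrable (fun r => ℓ D r ξ) ρ :=
  integrable_of_abs_le
    (hℓ.comp (measurable_const.prodMk (measurable_id.prodMk measurable_const))).stronglyMeasurable
    fun r => hB D r ξ

lemma integrable_integral_loss
    (hℓ : Measurable fun p : (Fin m → Z) × R × Z => ℓ p.1 p.2.1 p.2.2)
    (hB : ∀ D r ξ, |ℓ D r ξ| ≤ B) (D : Fin m → Z) :
    Integrable (fun r => ∫ ξ, ℓ D r ξ ∂μ) ρ :=
  integrable_of_abs_le
    (hℓ.comp (measurable_const.prodMk measurable_id)).stronglyMeasurable.integral_prod_right'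
    fun r => abs_integral_le_of_abs_le fun ξ => hB D r ξ

lemma integrable_gap (hℓ : Measurable fun p : (Fin m → Z) × R × Z => ℓ p.1 p.2.1 p.2.2)
    (hB : ∀ D r ξ, |ℓ D r ξ| ≤ B) (D : Fin m → Z) :
    Integrable (fun r => ∫ ξ, ℓ D r ξ ∂μ - (1 / (m : ℝ)) * ∑ i, ℓ D r (D i)) ρ :=
  (integrable_integral_loss hℓ hB D).sub
    ((integrable_finsetSum _ fun i _ => integrable_loss hℓ hB D (D i)).const_mul _)

lemma integral_gap_eq (hℓ : Measurable fun p : (Fin m → Z) × R × Z => ℓ p.1 p.2.1 p.2.2)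
    (hB : ∀ D r ξ, |ℓ D r ξ| ≤ B) (D : Fin m → Z) :
    ∫ r, (∫ ξ, ℓ D r ξ ∂μ - (1 / (m : ℝ)) * ∑ i, ℓ D r (D i)) ∂ρ
      = ∫ ξ, ∫ r, ℓ D r ξ ∂ρ ∂μ - (1 / (m : ℝ)) * ∑ i, ∫ r, ℓ D r (D i) ∂ρ := by
  have hD : Measurable fun q : R × Z => ℓ D q.1 q.2 :=
    hℓ.comp (measurable_const.prodMk measurable_id)
  rw [integral_sub (integrable_integral_loss hℓ hB D)
      ((integrable_finsetSum _ fun i _ => integrable_loss hℓ hB D (D i)).const_mul _),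
    integral_const_mul, integral_finsetSum _ fun i _ => integrable_loss hℓ hB D (D i),
    integral_integral_swap (integrable_of_abs_le hD.stronglyMeasurable fun q => hB D q.1 q.2)]

theorem IsUniformlyStable.abs_integral_gap_le {ε : ℝ} (hε : IsUniformlyStable ρ ℓ ε)
    (hm : m ≠ 0) (hℓ : Measurable fun p : (Fin m → Z) × R × Z => ℓ p.1 p.2.1 p.2.2)
    (hB : ∀ D r ξ, |ℓ D r ξ| ≤ B) :
    |∫ D, ∫ r, (∫ ξ, ℓ D r ξ ∂μ - (1 / (m : ℝ)) * ∑ i, ℓ D r (D i)) ∂ρ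
      ∂Measure.pi fun _ => μ| ≤ ε := by
  set Φ : (Fin m → Z) → Z → ℝ := fun D ξ => ∫ r, ℓ D r ξ ∂ρ
  have hΦ : StronglyMeasurable (Function.uncurry Φ) :=
    (hℓ.comp (measurable_fst.fst.prodMk (measurable_snd.prodMk measurable_fst.snd))
      ).stronglyMeasurable.integral_prod_right'
  have hΦB : ∀ D ξ, |Φ D ξ| ≤ B := fun D ξ => abs_integral_le_of_abs_le fun r => hB D r ξ
  simp_rw [integral_gap_eq hℓ hB]
  rw [integral_sub (integrable_integral_uncurry hΦ hΦB)
      ((integrable_finsetSum _ fun i _ => integrable_apply_diag hΦ hΦB i).const_mul _),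
    integral_const_mul, integral_finsetSum _ fun i _ => integrable_apply_diag hΦ hΦB i]
  exact abs_sub_average_le hm fun i =>
    abs_integral_integral_sub_integral_apply_le hΦ hΦB i fun D ξ => hε D i ξ ξ

end Stability

lemma sum_Ioc_le_integral_of_antitoneOn {f : ℝ → ℝ} {a b : ℕ} (hab : a ≤ b)
    (hf : AntitoneOn f (Set.Icc a b)) : ∑ s ∈ Ioc a b, f s ≤ ∫ x in a..b, f x := by
  rw [← Finset.Ico_add_one_add_one_eq_Ioc, ← Finset.sum_Ico_add']
  exact_mod_cast hf.sum_le_integral_Ico hab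

lemma sum_Ioc_inv_le_log_div {t T : ℕ} (ht : 0 < t) (htT : t ≤ T) :
    ∑ s ∈ Ioc t T, (s : ℝ)⁻¹ ≤ Real.log (T / t) := by
  have ht' : (0 : ℝ) < t := by exact_mod_cast ht
  have htT' : (t : ℝ) ≤ T := by exact_mod_cast htT
  calc ∑ s ∈ Ioc t T, (s : ℝ)⁻¹ ≤ ∫ x in (t : ℝ)..T, x⁻¹ :=
        sum_Ioc_le_integral_of_antitoneOn htT fun x hx y _ hxy =>
          inv_anti₀ (ht'.trans_le hx.1) hxy
    _ = Real.log (T / t) := integral_inv (by simp [Set.uIcc_of_le htT', ht'.not_ge])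

lemma sum_Ioc_rpow_neg_le {q : ℝ} (hq : 0 < q) {t T : ℕ} (ht : 0 < t) (htT : t ≤ T) :
    ∑ s ∈ Ioc t T, (s : ℝ) ^ (-(1 + q)) ≤ (t : ℝ) ^ (-q) / q := by
  have ht' : (0 : ℝ) < t := by exact_mod_cast ht
  have htT' : (t : ℝ) ≤ T := by exact_mod_cast htT
  calc ∑ s ∈ Ioc t T, (s : ℝ) ^ (-(1 + q)) ≤ ∫ x in (t : ℝ)..T, x ^ (-(1 + q)) :=
        sum_Ioc_le_integral_of_antitoneOn htT fun x hx y _ hxy =>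
          Real.rpow_le_rpow_of_nonpos (ht'.trans_le hx.1) hxy (by linarith)
    _ = ((t : ℝ) ^ (-q) - (T : ℝ) ^ (-q)) / q := by
        rw [integral_rpow (.inr ⟨by linarith, by simp [Set.uIcc_of_le htT', ht'.not_ge]⟩)]
        rw [show -(1 + q) + 1 = -q by ring, div_neg, ← neg_div, neg_sub]
    _ ≤ (t : ℝ) ^ (-q) / q := by
        gcongr
        exact sub_le_self _ (by positivity)

lemma prod_Ioc_one_add_mul_le_rpow {η : ℕ → ℝ} {γ c : ℝ} (hγ : 0 ≤ γ) (hc : 0 ≤ c)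
    (hη₀ : ∀ s, 0 ≤ η s) (hη : ∀ s, 1 ≤ s → η s ≤ c / s) {t T : ℕ} (ht : 0 < t)
    (htT : t ≤ T) :
    ∏ s ∈ Ioc t T, (1 + η s * γ) ≤ ((T : ℝ) / t) ^ (γ * c) := by
  have hTt : (0 : ℝ) < T / t := by
    have : 0 < T := ht.trans_le htT
    positivity
  calc ∏ s ∈ Ioc t T, (1 + η s * γ) ≤ ∏ s ∈ Ioc t T, Real.exp (γ * c * (s : ℝ)⁻¹) := by
        refine prod_le_prod (fun s _ => by have := hη₀ s; positivity) fun s hs => ?_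
        have hs : 1 ≤ s := by have := (mem_Ioc.1 hs).1; omega
        calc 1 + η s * γ ≤ 1 + γ * c * (s : ℝ)⁻¹ := by
              have := mul_le_mul_of_nonneg_left (hη s hs) hγ
              rw [div_eq_mul_inv] at this
              linarith
          _ ≤ _ := by linarith [Real.add_one_le_exp (γ * c * (s : ℝ)⁻¹)]
    _ = Real.exp (γ * c * ∑ s ∈ Ioc t T, (s : ℝ)⁻¹) := by rw [mul_sum, Real.exp_sum]
    _ ≤ Real.exp (γ * c * Real.log (T / t)) := by
        gcongr
        exact sum_Ioc_inv_le_log_div ht htT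
    _ = ((T : ℝ) / t) ^ (γ * c) := by rw [Real.rpow_def_of_pos hTt, mul_comm]

lemma sum_Ioc_mul_prod_one_add_mul_le {η : ℕ → ℝ} {γ c : ℝ} (hγ : 0 < γ) (hc : 0 < c)
    (hη₀ : ∀ s, 0 ≤ η s) (hη : ∀ s, 1 ≤ s → η s ≤ c / s) {t₀ T : ℕ} (ht₀ : 0 < t₀)
    (ht₀T : t₀ ≤ T) :
    ∑ t ∈ Ioc t₀ T, η t * ∏ s ∈ Ioc t T, (1 + η s * γ) ≤ ((T : ℝ) / t₀) ^ (γ * c) / γ := by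
  have hq : 0 < γ * c := mul_pos hγ hc
  have hT : (0 : ℝ) < T := by exact_mod_cast ht₀.trans_le ht₀T
  have ht₀' : (0 : ℝ) < t₀ := by exact_mod_cast ht₀
  calc ∑ t ∈ Ioc t₀ T, η t * ∏ s ∈ Ioc t T, (1 + η s * γ)
      ≤ ∑ t ∈ Ioc t₀ T, c * (T : ℝ) ^ (γ * c) * (t : ℝ) ^ (-(1 + γ * c)) := by
        refine sum_le_sum fun t ht => ?_
        obtain ⟨ht₀t, htT⟩ := mem_Ioc.1 ht
        have ht' : (0 : ℝ) < t := by exact_mod_cast ht₀.trans ht₀t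
        calc η t * ∏ s ∈ Ioc t T, (1 + η s * γ) ≤ c / t * ((T : ℝ) / t) ^ (γ * c) :=
              mul_le_mul (hη t (by omega))
                (prod_Ioc_one_add_mul_le_rpow hγ.le hc.le hη₀ hη (by omega) htT)
                (prod_nonneg fun s _ => by have := hη₀ s; positivity) (by positivity)
          _ = c * (T : ℝ) ^ (γ * c) * (t : ℝ) ^ (-(1 + γ * c)) := by
              rw [Real.div_rpow hT.le ht'.le, Real.rpow_neg ht'.le, Real.rpow_add ht',
                Real.rpow_one]
              field_simp
    _ = c * (T : ℝ) ^ (γ * c) * ∑ t ∈ Ioc t₀ T, (t : ℝ) ^ (-(1 + γ * c)) := by rw [mul_sum]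
    _ ≤ c * (T : ℝ) ^ (γ * c) * ((t₀ : ℝ) ^ (-(γ * c)) / (γ * c)) := by
        gcongr
        exact sum_Ioc_rpow_neg_le hq ht₀ ht₀T
    _ = ((T : ℝ) / t₀) ^ (γ * c) / γ := by
        rw [Real.div_rpow hT.le ht₀'.le, Real.rpow_neg ht₀'.le]
        field_simp

def sgdStabilityBound (η : ℕ → ℝ) (L γ : ℝ) (t₀ T : ℕ) : ℝ :=
  t₀ + 2 * L ^ 2 * ∑ t ∈ Ioc t₀ T, η t * ∏ s ∈ Ioc t T, (1 + η s * γ)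

lemma exists_sgdStabilityBound_le {η : ℕ → ℝ} {L γ c : ℝ} (hγ : 0 < γ) (hc : 0 < c)
    (hη₀ : ∀ s, 0 ≤ η s) (hη : ∀ s, 1 ≤ s → η s ≤ c / s) {T : ℕ} (hT : 1 ≤ T) :
    ∃ t₀ ≤ T,
      sgdStabilityBound η L γ t₀ T ≤ (2 + 2 * L ^ 2 / γ) * (T : ℝ) ^ (γ * c / (1 + γ * c)) := by
  set q := γ * c
  have hq : 0 < q := mul_pos hγ hc
  set a := q / (1 + q)
  have ha : a < 1 := (div_lt_one (by linarith)).2 (by linarith)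
  have hT' : (1 : ℝ) ≤ T := by exact_mod_cast hT
  have hTa : 1 ≤ (T : ℝ) ^ a := Real.one_le_rpow hT' (by positivity)
  set t₀ := ⌈(T : ℝ) ^ a⌉₊
  have ht₀ : (T : ℝ) ^ a ≤ t₀ := Nat.le_ceil _
  have ht₀' : (t₀ : ℝ) ≤ 2 * (T : ℝ) ^ a := by
    linarith [Nat.ceil_lt_add_one (zero_le_one.trans hTa)]
  have ht₀_pos : 0 < t₀ := Nat.ceil_pos.2 (by positivity)
  have ht₀T : t₀ ≤ T := Nat.ceil_le.2 <| by
    simpa using Real.rpow_le_rpow_of_exponent_le hT' ha.le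
  refine ⟨t₀, ht₀T, ?_⟩
  have hratio : ((T : ℝ) / t₀) ^ q ≤ (T : ℝ) ^ a :=
    calc ((T : ℝ) / t₀) ^ q ≤ ((T : ℝ) / (T : ℝ) ^ a) ^ q := by gcongr
      _ = (T : ℝ) ^ a := by
          rw [← Real.rpow_one_sub' (by positivity) (by linarith), ← Real.rpow_mul (by positivity)]
          congr 1
          simp only [a]
          field_simp
          ring
  have hsum := sum_Ioc_mul_prod_one_add_mul_le hγ hc hη₀ hη ht₀_pos ht₀T
  calc sgdStabilityBound η L γ t₀ T ≤ 2 * (T : ℝ) ^ a + 2 * L ^ 2 * ((T : ℝ) ^ a / γ) := by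
        unfold sgdStabilityBound
        gcongr
        exact hsum.trans (by gcongr)
    _ = (2 + 2 * L ^ 2 / γ) * (T : ℝ) ^ a := by ring

lemma le_sum_mul_prod_of_le_mul_add {d a b : ℕ → ℝ} {n₀ N : ℕ} (hN : n₀ ≤ N)
    (hb : ∀ n, 0 ≤ b n) (h₀ : d n₀ ≤ 0)
    (hstep : ∀ n, n₀ ≤ n → n < N → d (n + 1) ≤ b (n + 1) * d n + a (n + 1)) :
    d N ≤ ∑ t ∈ Ioc n₀ N, a t * ∏ s ∈ Ioc t N, b s := by
  induction N, hN using Nat.le_induction with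
  | base => simpa using h₀
  | succ N hN ih =>
    calc d (N + 1) ≤ b (N + 1) * d N + a (N + 1) := hstep N hN N.lt_add_one
      _ ≤ b (N + 1) * (∑ t ∈ Ioc n₀ N, a t * ∏ s ∈ Ioc t N, b s) + a (N + 1) := by
          gcongr
          · exact hb _
          · exact ih fun n hn hnN => hstep n hn (by omega)
      _ = ∑ t ∈ Ioc n₀ (N + 1), a t * ∏ s ∈ Ioc t (N + 1), b s := by
          rw [sum_Ioc_succ_top hN, Ioc_self, prod_empty, mul_one, mul_sum]
          congr 1
          refine sum_congr rfl fun t ht => ?_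
          rw [prod_Ioc_succ_top (mem_Ioc.1 ht).2]
          ring

lemma norm_sub_smul_sub_sub_smul_le {E : Type*} [NormedAddCommGroup E] [NormedSpace ℝ E]
    {η : ℝ} (hη : 0 ≤ η) (x y u v : E) :
    ‖(x - η • u) - (y - η • v)‖ ≤ ‖x - y‖ + η * ‖u - v‖ := by
  calc ‖(x - η • u) - (y - η • v)‖ = ‖(x - y) - η • (u - v)‖ := by
        rw [smul_sub]; congr 1; abel
    _ ≤ ‖x - y‖ + η * ‖u - v‖ := by
        simpa [norm_smul, abs_of_nonneg hη] using norm_sub_le (x - y) (η • (u - v))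

lemma norm_gradient_le_of_abs_sub_le {E : Type*} [NormedAddCommGroup E] [InnerProductSpace ℝ E]
    [CompleteSpace E] {f : E → ℝ} {L : ℝ} (hL : 0 ≤ L) (hf : ∀ x y, |f x - f y| ≤ L * ‖x - y‖)
    (x : E) : ‖gradient f x‖ ≤ L := by
  rw [← (InnerProductSpace.toDual ℝ E).norm_map, toDual_gradient]
  exact norm_fderiv_le_of_lip' ℝ hL (.of_forall fun y => hf y x)

section GradientSteps

variable {E Z : Type*} [NormedAddCommGroup E] [NormedSpace ℝ E] {m : ℕ}
  {G : Z → E → E} {L γ : ℝ} {η : ℕ → ℝ} {I : ℕ → Fin m} {D : Fin m → Z} {j : Fin m} {ξ' : Z}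
  {x y : ℕ → E} {t₀ T : ℕ}

lemma norm_sgd_sub_le_of_update (hγ : 0 ≤ γ) (hG_bdd : ∀ ξ x, ‖G ξ x‖ ≤ L)
    (hG_lip : ∀ ξ x y, ‖G ξ x - G ξ y‖ ≤ γ * ‖x - y‖) (hη₀ : ∀ t, 0 ≤ η t) (ht₀T : t₀ ≤ T)
    (h₁ : x 1 = y 1)
    (hx : ∀ t, 1 ≤ t → t ≤ T → x (t + 1) = x t - η t • G (D (I t)) (x t))
    (hy : ∀ t, 1 ≤ t → t ≤ T → y (t + 1) = y t - η t • G (Function.update D j ξ' (I t)) (y t))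
    (hI : ∀ t, 1 ≤ t → t ≤ t₀ → I t ≠ j) :
    ‖x (T + 1) - y (T + 1)‖ ≤
      ∑ t ∈ Ioc t₀ T, 2 * η t * L * (if I t = j then 1 else 0) * ∏ s ∈ Ioc t T, (1 + η s * γ) := by
  have hagree : ∀ t ≤ t₀, x (t + 1) = y (t + 1) := by
    intro t ht
    induction t with
    | zero => exact h₁
    | succ t ih =>
      rw [hx (t + 1) (by omega) (by omega), hy (t + 1) (by omega) (by omega), ih (by omega),
        Function.update_of_ne (hI (t + 1) (by omega) ht)]
  refine le_sum_mul_prod_of_le_mul_add (d := fun n => ‖x (n + 1) - y (n + 1)‖) ht₀T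
    (fun s => by have := hη₀ s; positivity) (by simp [hagree t₀ le_rfl]) fun n hn hnT => ?_
  set u := G (D (I (n + 1))) (x (n + 1))
  set v := G (Function.update D j ξ' (I (n + 1))) (y (n + 1))
  have hstep := norm_sub_smul_sub_sub_smul_le (hη₀ (n + 1)) (x (n + 1)) (y (n + 1)) u v
  rw [← hx (n + 1) (by omega) (by omega), ← hy (n + 1) (by omega) (by omega)] at hstep
  have hηd := mul_nonneg (mul_nonneg (hη₀ (n + 1)) hγ) (norm_nonneg (x (n + 1) - y (n + 1)))
  split_ifs with hj
  · have huv : ‖u - v‖ ≤ 2 * L := (norm_sub_le u v).trans <| by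
      linarith [hG_bdd (D (I (n + 1))) (x (n + 1)),
        hG_bdd (Function.update D j ξ' (I (n + 1))) (y (n + 1))]
    nlinarith [mul_le_mul_of_nonneg_left huv (hη₀ (n + 1))]
  · have huv : ‖u - v‖ ≤ γ * ‖x (n + 1) - y (n + 1)‖ := by
      simpa only [u, v, Function.update_of_ne hj] using hG_lip _ (x (n + 1)) (y (n + 1))
    nlinarith [mul_le_mul_of_nonneg_left huv (hη₀ (n + 1))]

end GradientSteps

section Deviation

variable {Ω : Type*} {m : ℕ}

noncomputable def sgdDeviationBound (I : ℕ → Ω → Fin m) (j : Fin m) (η : ℕ → ℝ) (L γ : ℝ)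
    (t₀ T : ℕ) (ω : Ω) : ℝ :=
  (⋃ t ∈ Icc 1 t₀, I t ⁻¹' {j}).indicator 1 ω
    + ∑ t ∈ Ioc t₀ T, 2 * L ^ 2 * (η t * ∏ s ∈ Ioc t T, (1 + η s * γ)) * (I t ⁻¹' {j}).indicator 1 ω

variable {I : ℕ → Ω → Fin m} {j : Fin m} {η : ℕ → ℝ} {L γ : ℝ} {t₀ T : ℕ}

lemma integrable_sgdDeviationBound [MeasurableSpace Ω] {π : Measure Ω} [IsFiniteMeasure π]
    (hI_meas : ∀ t, Measurable (I t)) :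
    Integrable (sgdDeviationBound I j η L γ t₀ T) π :=
  ((integrable_const 1).indicator
      (measurableSet_biUnion _ fun t _ => hI_meas t (measurableSet_singleton j))).add
    (integrable_finsetSum _ fun t _ =>
      ((integrable_const 1).indicator (hI_meas t (measurableSet_singleton j))).const_mul _)

lemma integral_sgdDeviationBound_le [MeasurableSpace Ω] {π : Measure Ω}
    [IsProbabilityMeasure π] (hI_meas : ∀ t, Measurable (I t))
    (hI_unif : ∀ t i, π (I t ⁻¹' {i}) = 1 / (m : ENNReal)) :
    ∫ ω, sgdDeviationBound I j η L γ t₀ T ω ∂π ≤ sgdStabilityBound η L γ t₀ T / m := by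
  have hmeas : ∀ t, MeasurableSet (I t ⁻¹' {j}) := fun t => hI_meas t (measurableSet_singleton j)
  have hprob : ∀ t, π.real (I t ⁻¹' {j}) = 1 / m := fun t => by
    simp [measureReal_def, hI_unif]
  have hA : MeasurableSet (⋃ t ∈ Icc 1 t₀, I t ⁻¹' {j}) :=
    measurableSet_biUnion _ fun t _ => hmeas t
  have hA_int : Integrable ((⋃ t ∈ Icc 1 t₀, I t ⁻¹' {j}).indicator (1 : Ω → ℝ)) π :=
    (integrable_const 1).indicator hA
  have hint : ∀ t ∈ Ioc t₀ T, Integrable (fun ω =>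
      2 * L ^ 2 * (η t * ∏ s ∈ Ioc t T, (1 + η s * γ)) * (I t ⁻¹' {j}).indicator (1 : Ω → ℝ) ω) π :=
    fun t _ => ((integrable_const 1).indicator (hmeas t)).const_mul _
  have hunion := measureReal_biUnion_finset_le (μ := π) (Icc 1 t₀) fun t => I t ⁻¹' {j}
  simp only [hprob, sum_const, Nat.card_Icc, add_tsub_cancel_right, nsmul_eq_mul,
    ← div_eq_mul_one_div] at hunion
  unfold sgdDeviationBound
  rw [integral_add hA_int (integrable_finsetSum _ hint), integral_indicator_one hA,
    integral_finsetSum _ hint]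
  simp_rw [integral_const_mul, integral_indicator_one (hmeas _), hprob]
  simp only [sgdStabilityBound, ← div_eq_mul_one_div, add_div, mul_sum, sum_div]
  gcongr

lemma abs_sub_le_sgdDeviationBound {E Z : Type*} [NormedAddCommGroup E] [NormedSpace ℝ E]
    {f : E → ℝ} {G : Z → E → E} (hγ : 0 ≤ γ) (hf_range : ∀ θ, f θ ∈ Set.Icc (0 : ℝ) 1)
    (hf_lip : ∀ θ θ', |f θ - f θ'| ≤ L * ‖θ - θ'‖) (hG_bdd : ∀ ξ x, ‖G ξ x‖ ≤ L)
    (hG_lip : ∀ ξ x y, ‖G ξ x - G ξ y‖ ≤ γ * ‖x - y‖) (hη₀ : ∀ t, 0 ≤ η t) (ht₀T : t₀ ≤ T)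
    {D : Fin m → Z} {ξ' : Z} {x y : ℕ → E} {ω : Ω} (h₁ : x 1 = y 1)
    (hx : ∀ t, 1 ≤ t → t ≤ T → x (t + 1) = x t - η t • G (D (I t ω)) (x t))
    (hy : ∀ t, 1 ≤ t → t ≤ T →
      y (t + 1) = y t - η t • G (Function.update D j ξ' (I t ω)) (y t)) :
    |f (x (T + 1)) - f (y (T + 1))| ≤ sgdDeviationBound I j η L γ t₀ T ω := by
  have hind : ∀ t, 0 ≤ (I t ⁻¹' {j}).indicator (1 : Ω → ℝ) ω := fun t =>
    Set.indicator_nonneg (by simp) ω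
  by_cases hω : ω ∈ ⋃ t ∈ Icc 1 t₀, I t ⁻¹' {j}
  · have hsum : 0 ≤ ∑ t ∈ Ioc t₀ T,
        2 * L ^ 2 * (η t * ∏ s ∈ Ioc t T, (1 + η s * γ)) * (I t ⁻¹' {j}).indicator 1 ω :=
      sum_nonneg fun t _ => mul_nonneg (mul_nonneg (by positivity) (mul_nonneg (hη₀ t)
        (prod_nonneg fun s _ => by have := hη₀ s; positivity))) (hind t)
    have h₁ := hf_range (x (T + 1))
    have h₂ := hf_range (y (T + 1))
    rw [sgdDeviationBound, Set.indicator_of_mem hω, Pi.one_apply]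
    exact (abs_sub_le_of_nonneg_of_le h₁.1 h₁.2 h₂.1 h₂.2).trans (le_add_of_nonneg_right hsum)
  · have hI : ∀ t, 1 ≤ t → t ≤ t₀ → I t ω ≠ j := fun t h₁ h₂ hj =>
      hω (Set.mem_biUnion (mem_Icc.2 ⟨h₁, h₂⟩) hj)
    calc |f (x (T + 1)) - f (y (T + 1))| ≤ L * ‖x (T + 1) - y (T + 1)‖ := hf_lip _ _
      _ ≤ L * ∑ t ∈ Ioc t₀ T, 2 * η t * L * (if I t ω = j then 1 else 0) *
            ∏ s ∈ Ioc t T, (1 + η s * γ) := by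
          gcongr
          · exact (norm_nonneg _).trans (hG_bdd (D (I 0 ω)) (x 0))
          · exact norm_sgd_sub_le_of_update hγ hG_bdd hG_lip hη₀ ht₀T h₁ hx hy hI
      _ = sgdDeviationBound I j η L γ t₀ T ω := by
          rw [sgdDeviationBound, Set.indicator_of_notMem hω, zero_add, mul_sum]
          refine sum_congr rfl fun t _ => ?_
          by_cases hj : I t ω = j
          · rw [if_pos hj, Set.indicator_of_mem (show ω ∈ I t ⁻¹' {j} from hj), Pi.one_apply]
            ring
          · rw [if_neg hj, Set.indicator_of_notMem (show ω ∉ I t ⁻¹' {j} from hj)]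
            ring

end Deviation

section SGD

variable {Z V Ω E : Type*} [MeasurableSpace Z] [MeasurableSpace V] [MeasurableSpace Ω]
  [NormedAddCommGroup E] [InnerProductSpace ℝ E] [CompleteSpace E] {m : ℕ}

theorem isUniformlyStable_sgd (ν : Measure V) [IsProbabilityMeasure ν] (π : Measure Ω)
    [IsProbabilityMeasure π] {F : V → E → Z → ℝ} {L γ : ℝ} (hL : 0 ≤ L) (hγ : 0 ≤ γ)
    (hF_range : ∀ w θ ξ, F w θ ξ ∈ Set.Icc (0 : ℝ) 1)
    (hF_lip : ∀ w ξ θ θ', |F w θ ξ - F w θ' ξ| ≤ L * ‖θ - θ'‖)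
    (hF_grad_lip : ∀ w ξ θ θ',
      ‖gradient (fun ϑ => F w ϑ ξ) θ - gradient (fun ϑ => F w ϑ ξ) θ'‖ ≤ γ * ‖θ - θ'‖)
    {I : ℕ → Ω → Fin m} (hI_meas : ∀ t, Measurable (I t))
    (hI_unif : ∀ t i, π (I t ⁻¹' {i}) = 1 / (m : ENNReal)) {η : ℕ → ℝ} (hη₀ : ∀ t, 0 ≤ η t)
    {T : ℕ} {P : (Fin m → Z) → V → ℕ → Ω → E} {θ₁ : E} (hP₁ : ∀ D w ω, P D w 1 ω = θ₁)
    (hP : ∀ D w (t : ℕ), 1 ≤ t → t ≤ T → ∀ ω,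
      P D w (t + 1) ω = P D w t ω - η t • gradient (fun θ => F w θ (D (I t ω))) (P D w t ω))
    (hℓ : Measurable fun p : (Fin m → Z) × (V × Ω) × Z =>
      F p.2.1.1 (P p.1 p.2.1.1 (T + 1) p.2.1.2) p.2.2)
    {t₀ : ℕ} (ht₀T : t₀ ≤ T) :
    IsUniformlyStable (ν.prod π) (fun D r ξ => F r.1 (P D r.1 (T + 1) r.2) ξ)
      (sgdStabilityBound η L γ t₀ T / m) := by
  intro D j ξ' ξ
  have hpoint : ∀ r : V × Ω, ‖F r.1 (P D r.1 (T + 1) r.2) ξ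
      - F r.1 (P (Function.update D j ξ') r.1 (T + 1) r.2) ξ‖
        ≤ sgdDeviationBound I j η L γ t₀ T r.2 := fun r =>
    abs_sub_le_sgdDeviationBound (G := fun ξ => gradient (fun ϑ => F r.1 ϑ ξ))
      (x := fun t => P D r.1 t r.2) (y := fun t => P _ r.1 t r.2) hγ (hF_range r.1 · ξ)
      (hF_lip r.1 ξ) (fun ξ => norm_gradient_le_of_abs_sub_le hL (hF_lip r.1 ξ))
      (hF_grad_lip r.1) hη₀ ht₀T ((hP₁ D r.1 r.2).trans (hP₁ _ r.1 r.2).symm)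
      (fun t h₁ h₂ => hP D r.1 t h₁ h₂ r.2) (fun t h₁ h₂ => hP _ r.1 t h₁ h₂ r.2)
  have hint := integrable_loss (ρ := ν.prod π)
    (ℓ := fun D r ξ => F r.1 (P D r.1 (T + 1) r.2) ξ) hℓ
    (fun D r ξ => abs_le_one_of_mem_Icc (hF_range _ _ _))
  rw [← integral_sub (hint D ξ) (hint _ ξ)]
  refine (norm_integral_le_of_norm_le ((integrable_sgdDeviationBound hI_meas).comp_snd ν)
    (.of_forall hpoint)).trans ?_
  rw [integral_fun_snd, probReal_univ, one_smul]
  exact integral_sgdDeviationBound_le hI_meas hI_unif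

end SGD

theorem mam_generalization_bound_general
    (Z W : Type) [MeasurableSpace Z] [MeasurableSpace W]
    (μ : Measure Z) [IsProbabilityMeasure μ]
    (ν : Measure W) [IsProbabilityMeasure ν]
    (n k : ℕ)
    (F : (Fin n → W) → EuclideanSpace ℝ (Fin k) → Z → ℝ)
    (hF_meas : Measurable fun x : (Fin n → W) × EuclideanSpace ℝ (Fin k) × Z =>
      F x.1 x.2.1 x.2.2)
    (hF_range : ∀ W' θ ξ, F W' θ ξ ∈ Set.Icc (0 : ℝ) 1)
    (Lbar γbar : ℝ) (hLbar : 0 < Lbar) (hγbar : 0 < γbar)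
    (hF_lip : ∀ W' ξ θ θ', |F W' θ ξ - F W' θ' ξ| ≤ Lbar * ‖θ - θ'‖)
    (hF_grad_lip : ∀ W' ξ θ θ',
      ‖gradient (fun ϑ => F W' ϑ ξ) θ - gradient (fun ϑ => F W' ϑ ξ) θ'‖
        ≤ γbar * ‖θ - θ'‖)
    (c : ℝ) (hc : 0 < c) :
    ∃ K : ℝ, 0 < K ∧ ∃ C : ℝ, 0 < C ∧ C < 1 ∧
      ∀ (m T : ℕ), 1 < m → 1 ≤ T →
      ∀ (Ω : Type) [MeasurableSpace Ω] (π : Measure Ω),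
        IsProbabilityMeasure π →
      ∀ (I : ℕ → Ω → Fin m),
        (∀ t, Measurable (I t)) →
        ProbabilityTheory.iIndepFun I π →
        (∀ t (i : Fin m), π (I t ⁻¹' {i}) = 1 / (m : ENNReal)) →
      ∀ (η : ℕ → ℝ), (∀ t, 0 ≤ η t) → (∀ t : ℕ, 1 ≤ t → η t ≤ c / t) →
      ∀ (P : (Fin m → Z) → (Fin n → W) → ℕ → Ω → EuclideanSpace ℝ (Fin k))
        (θ1 : EuclideanSpace ℝ (Fin k)),
        (∀ D W' ω, P D W' 1 ω = θ1) →
        (∀ D W' (t : ℕ), 1 ≤ t → t ≤ T → ∀ ω,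
          P D W' (t + 1) ω = P D W' t ω
            - η t • gradient (fun θ => F W' θ (D (I t ω))) (P D W' t ω)) →
        (Measurable fun x : (Fin m → Z) × (Fin n → W) × Ω =>
          P x.1 x.2.1 (T + 1) x.2.2) →
        |∫ D, ∫ W', ∫ ω,
            ((∫ ξ, F W' (P D W' (T + 1) ω) ξ ∂μ)
              - (1 / (m : ℝ)) * ∑ i, F W' (P D W' (T + 1) ω) (D i)) ∂π
          ∂(Measure.pi fun _ : Fin n => ν) ∂(Measure.pi fun _ : Fin m => μ)|
          ≤ K * (T : ℝ) ^ C / m := by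
  refine ⟨2 + 2 * Lbar ^ 2 / γbar, by positivity, γbar * c / (1 + γbar * c), by positivity,
    (div_lt_one (by positivity)).2 (by linarith), ?_⟩
  intro m T hm hT Ω _ π _ I hI_meas _ hI_unif η hη₀ hη P θ1 hP₁ hP hP_meas
  obtain ⟨t₀, ht₀T, hbound⟩ := exists_sgdStabilityBound_le (L := Lbar) hγbar hc hη₀ hη hT
  have hℓ : Measurable fun p : (Fin m → Z) × ((Fin n → W) × Ω) × Z =>
      F p.2.1.1 (P p.1 p.2.1.1 (T + 1) p.2.1.2) p.2.2 :=
    hF_meas.comp (measurable_snd.fst.fst.prodMk ((hP_meas.comp (measurable_fst.prodMk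
      (measurable_snd.fst.fst.prodMk measurable_snd.fst.snd))).prodMk measurable_snd.snd))
  have hB : ∀ D (r : (Fin n → W) × Ω) ξ, |F r.1 (P D r.1 (T + 1) r.2) ξ| ≤ 1 :=
    fun D r ξ => abs_le_one_of_mem_Icc (hF_range _ _ _)
  have hstable := isUniformlyStable_sgd (Measure.pi fun _ : Fin n => ν) π hLbar.le hγbar.le
    hF_range hF_lip hF_grad_lip hI_meas hI_unif hη₀ hP₁ hP hℓ ht₀T
  rw [integral_congr_ae (.of_forall fun D => (integral_prod _ (integrable_gap hℓ hB D)).symm)]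
  refine (hstable.abs_integral_gap_le (by omega) hℓ hB).trans ?_
  gcongr

/-- Theorem 6 (generalization bound for the MAM bilevel algorithm): if for every training
set `W'` and meta example `ξ` the upper loss `θ ↦ ℓ(θ, β(θ), ξ)` (denoted `F W' θ ξ`)
takes values in `[0,1]`, is `L̄`-Lipschitz and has `γ̄`-Lipschitz gradient, then there are
constants `K > 0` and `C ∈ (0,1)`, depending only on `c`, `L̄`, `γ̄`, such that for all
meta-set sizes `m`, horizons `T`, and runs of `T` steps of SGD on the empirical meta risk
with uniformly sampled meta examples and step sizes `η_t ≤ c/t` (with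
`c ≤ s(ℓ)/(2 L̄²)`), the expected generalization gap satisfies
`|E[R(A(D,W')) − R̂_D(A(D,W'))]| ≤ K T^C / m`. -/
theorem mam_generalization_bound
    (Z W : Type) [MeasurableSpace Z] [MeasurableSpace W]
    (μ : Measure Z) [IsProbabilityMeasure μ]
    (ν : Measure W) [IsProbabilityMeasure ν]
    (n k : ℕ)
    (F : (Fin n → W) → EuclideanSpace ℝ (Fin k) → Z → ℝ)
    (hF_meas : Measurable fun x : (Fin n → W) × EuclideanSpace ℝ (Fin k) × Z =>
      F x.1 x.2.1 x.2.2)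
    (hF_range : ∀ W' θ ξ, F W' θ ξ ∈ Set.Icc (0 : ℝ) 1)
    (Lbar γbar : ℝ) (hLbar : 0 < Lbar) (hγbar : 0 < γbar)
    (hF_diff : ∀ W' ξ, Differentiable ℝ (fun θ => F W' θ ξ))
    (hF_lip : ∀ W' ξ θ θ', |F W' θ ξ - F W' θ' ξ| ≤ Lbar * ‖θ - θ'‖)
    (hF_grad_lip : ∀ W' ξ θ θ',
      ‖gradient (fun ϑ => F W' ϑ ξ) θ - gradient (fun ϑ => F W' ϑ ξ) θ'‖
        ≤ γbar * ‖θ - θ'‖)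
    (sℓ : ℝ) (hsℓ : 0 < sℓ)
    (c : ℝ) (hc : 0 < c) (hc_small : c ≤ sℓ / (2 * Lbar ^ 2)) :
    ∃ K : ℝ, 0 < K ∧ ∃ C : ℝ, 0 < C ∧ C < 1 ∧
      ∀ (m T : ℕ), 1 < m → 1 ≤ T →
      ∀ (Ω : Type) [MeasurableSpace Ω] (π : Measure Ω),
        IsProbabilityMeasure π →
      ∀ (I : ℕ → Ω → Fin m),
        (∀ t, Measurable (I t)) →
        ProbabilityTheory.iIndepFun I π →
        (∀ t (i : Fin m), π (I t ⁻¹' {i}) = 1 / (m : ENNReal)) →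
      ∀ (η : ℕ → ℝ), (∀ t, 0 ≤ η t) → (∀ t : ℕ, 1 ≤ t → η t ≤ c / t) →
      ∀ (P : (Fin m → Z) → (Fin n → W) → ℕ → Ω → EuclideanSpace ℝ (Fin k))
        (θ1 : EuclideanSpace ℝ (Fin k)),
        (∀ D W' ω, P D W' 1 ω = θ1) →
        (∀ D W' (t : ℕ), 1 ≤ t → t ≤ T → ∀ ω,
          P D W' (t + 1) ω = P D W' t ω
            - η t • gradient (fun θ => F W' θ (D (I t ω))) (P D W' t ω)) →
        (Measurable fun x : (Fin m → Z) × (Fin n → W) × Ω =>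
          P x.1 x.2.1 (T + 1) x.2.2) →
        |∫ D, ∫ W', ∫ ω,
            ((∫ ξ, F W' (P D W' (T + 1) ω) ξ ∂μ)
              - (1 / (m : ℝ)) * ∑ i, F W' (P D W' (T + 1) ω) (D i)) ∂π
          ∂(Measure.pi fun _ : Fin n => ν) ∂(Measure.pi fun _ : Fin m => μ)|
          ≤ K * (T : ℝ) ^ C / m :=
  mam_generalization_bound_general Z W μ ν n k F hF_meas hF_range Lbar γbar hLbar hγbar hF_lip
    hF_grad_lip c hc
end
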